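/- arXiv:0807.2303 — 3 statements merged into one kernel-verified Lean document; each statement's English description precedes it below -/
import Mathlib

section
/- Every finite word w contains at most |w| + 1 distinct palindromic factors (where the empty word counts as a palindromic factor). -/
/-!
Appending a letter `a` to `w` creates at most one new palindromic factor, namely the longest
palindromic suffix `p` of `w ++ [a]`: any shorter palindromic suffix `u` is a suffix of `p`,
hence, reading both palindromes backwards, a proper prefix of `p`, and so already a factor of `w`.
Induction on `w` gives the bound.
-/

/-- The finset of (distinct) palindromic factors of a finite word `w`,
including the empty word. -/
def palFactors {A : Type*} [DecidableEq A] (w : List A) : Finset (List A) :=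
  ((w.inits.flatMap List.tails).filter (fun u => u.reverse = u)).toFinset

namespace List

variable {A : Type*}

theorem IsSuffix.isPrefix_of_reverse_eq {u v : List A} (h : u <:+ v) (hu : u.reverse = u)
    (hv : v.reverse = v) : u <+: v := by
  rw [← reverse_suffix, hu, hv]
  exact h

theorem IsPrefix.isInfix_of_ne_of_suffix_concat {u v w : List A} {a : A} (huv : u <+: v)
    (hne : u ≠ v) (hv : v <:+ w ++ [a]) : u <:+: w := by
  rcases suffix_concat_iff.mp hv with rfl | ⟨t, rfl, ht⟩
  · exact absurd (prefix_nil.mp huv) hne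
  · rcases prefix_concat_iff.mp huv with rfl | hut
    · exact absurd rfl hne
    · exact hut.isInfix.trans ht.isInfix

theorem exists_longest_palindromic_suffix (v : List A) :
    ∃ p, p <:+ v ∧ p.reverse = p ∧ ∀ u, u <:+ v → u.reverse = u → u.length ≤ p.length := by
  have hfin : {u | u <:+ v ∧ u.reverse = u}.Finite :=
    (finite_toSet v.tails).subset fun u hu => by simpa using hu.1
  obtain ⟨p, ⟨hpv, hp⟩, hmax⟩ := Set.exists_max_image _ length hfin ⟨[], nil_suffix, rfl⟩
  exact ⟨p, hpv, hp, fun u hu hpal => hmax u ⟨hu, hpal⟩⟩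

end List

theorem mem_palFactors {A : Type*} [DecidableEq A] {w u : List A} :
    u ∈ palFactors w ↔ u <:+: w ∧ u.reverse = u := by
  simp only [palFactors, List.mem_toFinset, List.mem_filter, List.mem_flatMap,
    List.mem_inits, List.mem_tails, decide_eq_true_eq]
  constructor
  · rintro ⟨⟨l, hl, hu⟩, hp⟩
    exact ⟨hu.isInfix.trans hl.isInfix, hp⟩
  · rintro ⟨⟨s, t, hst⟩, hp⟩
    exact ⟨⟨s ++ u, ⟨t, by simpa using hst⟩, ⟨s, rfl⟩⟩, hp⟩

theorem palFactors_nil {A : Type*} [DecidableEq A] : palFactors ([] : List A) = {[]} := by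
  simp [palFactors]

theorem exists_palFactors_append_singleton_subset {A : Type*} [DecidableEq A] (w : List A)
    (a : A) :
    ∃ p, palFactors (w ++ [a]) ⊆ insert p (palFactors w) := by
  obtain ⟨p, hpv, hp, hmax⟩ := (w ++ [a]).exists_longest_palindromic_suffix
  refine ⟨p, fun u hu => ?_⟩
  obtain ⟨hinf, hpal⟩ := mem_palFactors.mp hu
  rw [Finset.mem_insert, mem_palFactors]
  rcases List.infix_concat_iff.mp hinf with hsuf | hinf
  · have hup : u <+: p :=
      (List.suffix_of_suffix_length_le hsuf hpv (hmax u hsuf hpal)).isPrefix_of_reverse_eq hpal hp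
    by_cases hne : u = p
    · exact .inl hne
    · exact .inr ⟨hup.isInfix_of_ne_of_suffix_concat hne hpv, hpal⟩
  · exact .inr ⟨hinf, hpal⟩

/-- Every finite word `w` contains at most `|w| + 1` distinct palindromic factors. -/
theorem pal_factors_card_le {A : Type*} [DecidableEq A] (w : List A) :
    (palFactors w).card ≤ w.length + 1 := by
  induction w using List.reverseRecOn with
  | nil => simp [palFactors_nil]
  | append_singleton w a ih =>
    obtain ⟨p, hsub⟩ := exists_palFactors_append_singleton_subset w a
    calc (palFactors (w ++ [a])).card ≤ (insert p (palFactors w)).card := Finset.card_le_card hsub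
      _ ≤ (palFactors w).card + 1 := Finset.card_insert_le _ _
      _ ≤ (w ++ [a]).length + 1 := by simpa using ih
end

section
/- Let r be a finite word and p a non-empty palindrome such that p is a prefix of r, p is a suffix of r, and |r| ≤ 2|p|. Then r is a palindrome. -/
/-!
Write `r = p ++ s = t ++ p`. Since `|t| = |s| ≤ |p|`, the word `t` is a prefix of `p`, so `tᴿ` is a
suffix of `pᴿ = p` of the same length as the suffix `s` of `p`; hence `tᴿ = s` and
`rᴿ = pᴿ ++ tᴿ = p ++ s = r`.
-/

namespace List

variable {α : Type*}

theorem IsSuffix.eq_of_isSuffix_of_length_eq {x y z : List α} (hx : x <:+ z) (hy : y <:+ z)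
    (hxy : x.length = y.length) : x = y :=
  (suffix_of_suffix_length_le hx hy hxy.le).eq_of_length hxy

theorem reverse_eq_of_append_eq_append_of_reverse_eq {t p s : List α} (hpal : p.reverse = p)
    (h : t ++ p = p ++ s) (hlen : t.length ≤ p.length) : t.reverse = s := by
  have hts : t.length = s.length := by
    have := congrArg length h
    simp only [length_append] at this
    omega
  have ht : t <+: p := prefix_of_prefix_length_le (h ▸ prefix_append t p) (prefix_append p s) hlen
  have hs : s <:+ p := suffix_of_suffix_length_le (suffix_append p s) (h ▸ suffix_append t p)
    (by omega)
  exact IsSuffix.eq_of_isSuffix_of_length_eq (hpal ▸ ht.reverse) hs (by rw [length_reverse, hts])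

end List

theorem palindrome_of_overlapping_pal_prefix_suffix_general {A : Type*}
    (r p : List A) (hpal : p.reverse = p)
    (hpre : p <+: r) (hsuf : p <:+ r) (hlen : r.length ≤ 2 * p.length) :
    r.reverse = r := by
  obtain ⟨s, rfl⟩ := hpre
  obtain ⟨t, ht⟩ := hsuf
  have hts : t.reverse = s := List.reverse_eq_of_append_eq_append_of_reverse_eq hpal ht (by
    have := congrArg List.length ht
    simp only [List.length_append] at this hlen
    omega)
  rw [← ht, List.reverse_append, hpal, hts, ht]

/-- If `p` is a non-empty palindrome which is both a prefix and a suffix of `r`,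
and `|r| ≤ 2|p|`, then `r` is a palindrome. -/
theorem palindrome_of_overlapping_pal_prefix_suffix {A : Type*}
    (r p : List A) (hne : p ≠ []) (hpal : p.reverse = p)
    (hpre : p <+: r) (hsuf : p <:+ r) (hlen : r.length ≤ 2 * p.length) :
    r.reverse = r :=
  palindrome_of_overlapping_pal_prefix_suffix_general r p hpal hpre hsuf hlen
end

section
/- Let w be a finite word such that any two factors of w having the same longest palindromic prefix and the same longest palindromic suffix are equal. Then for every non-empty palindromic factor p of w, every complete return to p in w is a palindrome. -/
/-! If a complete return `r` to a palindrome `p` were not a palindrome, its longest palindromic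
prefix would be `p`: a longer one would begin with `p` and, being a palindrome, also end with `p`,
giving a third occurrence of `p` in `r`. Symmetrically its longest palindromic suffix would be `p`.
So `r` and `p` share both, hence `r = p` by hypothesis, a palindrome after all. -/

/-- `p` is the longest palindromic prefix of `u`. -/
def LongestPalPrefix {A : Type*} (p u : List A) : Prop :=
  p <+: u ∧ p.reverse = p ∧ ∀ p' : List A, p' <+: u → p'.reverse = p' → p'.length ≤ p.length

/-- `q` is the longest palindromic suffix of `u`. -/
def LongestPalSuffix {A : Type*} (q u : List A) : Prop :=
  q <:+ u ∧ q.reverse = q ∧ ∀ q' : List A, q' <:+ u → q'.reverse = q' → q'.length ≤ q.length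

/-- `r` is a complete return to `u` if `u` is both a prefix and a suffix of `r`
and `r` has exactly two occurrences of `u`. -/
def CompleteReturn {A : Type*} (u r : List A) : Prop :=
  u <+: r ∧ u <:+ r ∧ {st : List A × List A | r = st.1 ++ u ++ st.2}.ncard = 2

section Palindromes

variable {A : Type*} {p q u r : List A}

lemma exists_longestPalPrefix (u : List A) : ∃ p, LongestPalPrefix p u := by
  have hfin : {q : List A | q <+: u ∧ q.reverse = q}.Finite :=
    (List.finite_toSet u.inits).subset fun q hq => (List.mem_inits q u).mpr hq.1
  obtain ⟨p, ⟨hpu, hp⟩, hmax⟩ :=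
    Set.exists_max_image _ List.length hfin ⟨[], List.nil_prefix, rfl⟩
  exact ⟨p, hpu, hp, fun p' hp'u hp' => hmax p' ⟨hp'u, hp'⟩⟩

lemma isSuffix_iff_isPrefix_reverse_of_reverse_eq (hq : q.reverse = q) :
    q <:+ u ↔ q <+: u.reverse := by
  conv_rhs => rw [← hq]
  exact List.reverse_prefix.symm

lemma longestPalSuffix_iff_longestPalPrefix_reverse :
    LongestPalSuffix q u ↔ LongestPalPrefix q u.reverse := by
  constructor
  · rintro ⟨hqu, hq, hmax⟩
    exact ⟨(isSuffix_iff_isPrefix_reverse_of_reverse_eq hq).mp hqu, hq,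
      fun q' hq'u hq' => hmax q' ((isSuffix_iff_isPrefix_reverse_of_reverse_eq hq').mpr hq'u) hq'⟩
  · rintro ⟨hqu, hq, hmax⟩
    exact ⟨(isSuffix_iff_isPrefix_reverse_of_reverse_eq hq).mpr hqu, hq,
      fun q' hq'u hq' => hmax q' ((isSuffix_iff_isPrefix_reverse_of_reverse_eq hq').mp hq'u) hq'⟩

lemma LongestPalPrefix.self (hp : p.reverse = p) : LongestPalPrefix p p :=
  ⟨List.prefix_refl p, hp, fun _ hp' _ => hp'.length_le⟩

lemma LongestPalSuffix.self (hp : p.reverse = p) : LongestPalSuffix p p :=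
  ⟨List.suffix_refl p, hp, fun _ hp' _ => hp'.length_le⟩

lemma isSuffix_of_isPrefix_of_reverse_eq (hp : p.reverse = p) (hq : q.reverse = q)
    (hpq : p <+: q) : p <:+ q :=
  List.reverse_prefix.mp (by rwa [hp, hq])

lemma longestPalPrefix_of_occurs_only_at_ends (hp : p.reverse = p) (hpr : p <+: r)
    (hocc : ∀ s t, r = s ++ p ++ t → s = [] ∨ t = []) (hr : r.reverse ≠ r) :
    LongestPalPrefix p r := by
  obtain ⟨P, hPr, hP, hmax⟩ := exists_longestPalPrefix r
  have hpP : p <:+ P :=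
    isSuffix_of_isPrefix_of_reverse_eq hp hP
      (List.prefix_of_prefix_length_le hpr hPr (hmax p hpr hp))
  obtain ⟨s, rfl⟩ := hpP
  obtain ⟨t, rfl⟩ := hPr
  rcases hocc s t rfl with rfl | rfl
  · exact ⟨List.prefix_append p t, hp, hmax⟩
  · exact absurd (by simpa using hP) hr

lemma longestPalSuffix_of_occurs_only_at_ends (hp : p.reverse = p) (hpr : p <:+ r)
    (hocc : ∀ s t, r = s ++ p ++ t → s = [] ∨ t = []) (hr : r.reverse ≠ r) :
    LongestPalSuffix p r := by
  rw [longestPalSuffix_iff_longestPalPrefix_reverse]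
  refine longestPalPrefix_of_occurs_only_at_ends hp
    ((isSuffix_iff_isPrefix_reverse_of_reverse_eq hp).mp hpr) (fun s t hst => ?_)
    (by rwa [List.reverse_reverse, ne_comm])
  have : r = t.reverse ++ p ++ s.reverse := by
    rw [← List.reverse_reverse r, hst]
    simp [hp]
  simpa [or_comm] using hocc _ _ this

end Palindromes

lemma CompleteReturn.eq_nil_or_eq_nil {A : Type*} {u r s t : List A} (hr : CompleteReturn u r)
    (hst : r = s ++ u ++ t) : s = [] ∨ t = [] := by
  obtain ⟨⟨t₀, ht₀⟩, ⟨s₀, hs₀⟩, hcard⟩ := hr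
  by_contra! hne
  have hfin := Set.finite_of_ncard_ne_zero (hcard ▸ two_ne_zero)
  refine (lt_irrefl 2) (hcard ▸ (Set.two_lt_ncard_iff hfin).mpr
    ⟨([], t₀), (s₀, []), (s, t), by simp [ht₀], by simp [hs₀], hst, ?_, ?_, ?_⟩)
  · -- both ends coincide only when `r = u`, which leaves no room for `s`
    simp only [ne_eq, Prod.mk.injEq, not_and]
    rintro rfl rfl
    have := congrArg List.length (ht₀.trans hst)
    have hs : 0 < s.length := List.length_pos_iff.mpr hne.1
    simp at this
    omega
  · simp [hne.1.symm]
  · simp [hne.2.symm]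

/-- Let `w` be a finite word such that any two factors of `w` having the same longest
palindromic prefix and the same longest palindromic suffix are equal. Then for every
non-empty palindromic factor `p` of `w`, every complete return to `p` in `w` is a
palindrome. -/
theorem complete_returns_palindromic_of_unique_determination {A : Type*}
    (w : List A)
    (h : ∀ u v p q : List A, u <:+: w → v <:+: w →
      LongestPalPrefix p u → LongestPalPrefix p v →
      LongestPalSuffix q u → LongestPalSuffix q v → u = v) :
    ∀ p : List A, p <:+: w → p ≠ [] → p.reverse = p →
      ∀ r : List A, r <:+: w → CompleteReturn p r → r.reverse = r := by
  intro p hpw _ hp r hrw hr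
  by_contra hpal
  have hocc : ∀ s t, r = s ++ p ++ t → s = [] ∨ t = [] := fun _ _ => hr.eq_nil_or_eq_nil
  have hrp : r = p :=
    h r p p p hrw hpw (longestPalPrefix_of_occurs_only_at_ends hp hr.1 hocc hpal)
      (LongestPalPrefix.self hp) (longestPalSuffix_of_occurs_only_at_ends hp hr.2.1 hocc hpal)
      (LongestPalSuffix.self hp)
  exact hpal (hrp ▸ hp)
end
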